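/- Let n ≥ 1 and let (q',p') ∈ (Fin n → pH) × pH satisfy re p' = −∑ₐ normSq q'ₐ and normSq(p'−1) ≠ 0. Set qₐ = 2·(p'−1)⁻¹·q'ₐ and p = (p'−1)⁻¹·(p'+1). Then ∑ₐ normSq qₐ + normSq p = 1; that is, the inverse paraquaternionic Cayley transform maps the hypersurface Σ = {(q',p') : re p' = −∑ₐ normSq q'ₐ} (away from the set where normSq(p'−1) = 0) into the pseudo-sphere {∑ₐ normSq qₐ + normSq p = 1}. -/

import Mathlib

open scoped Quaternion

/-- The split quaternions (para-quaternions). -/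
local notation "pH" => ℍ[ℝ, 1, 1]

/-- The norm form `normSq p = p * star p` (a real scalar) of signature (2,2). -/
noncomputable def normSq (p : ℍ[ℝ, 1, 1]) : ℝ := (p * star p).re

/-- The inverse of a split quaternion `a` with `normSq a ≠ 0`:
`a⁻¹ = (normSq a)⁻¹ • star a`, a two-sided inverse. -/
noncomputable def pinv (a : ℍ[ℝ, 1, 1]) : ℍ[ℝ, 1, 1] := (normSq a)⁻¹ • star a

/-! The norm form is multiplicative because `a * star a` is central (a real scalar), so
`(a * b) * star (a * b) = a * (b * star b) * star a = normSq b * (a * star a)`. Hence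
`normSq (2 (p' - 1)⁻¹ q'ₐ) = 4 normSq q'ₐ / normSq (p' - 1)` and
`normSq ((p' - 1)⁻¹ (p' + 1)) = normSq (p' + 1) / normSq (p' - 1)`; on `Σ` the first terms sum
to `-4 re p' / normSq (p' - 1)`, and `normSq (p' + 1) - normSq (p' - 1) = 4 re p'`. -/

lemma mul_star_eq_normSq (a : pH) : a * star a = (normSq a : pH) :=
  QuaternionAlgebra.mul_star_eq_coe a

lemma normSq_mul (a b : pH) : normSq (a * b) = normSq a * normSq b := by
  apply QuaternionAlgebra.coe_injective (c₁ := (1 : ℝ)) (c₂ := 0) (c₃ := 1)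
  rw [← mul_star_eq_normSq, star_mul, mul_assoc, ← mul_assoc b, mul_star_eq_normSq,
    ← mul_assoc, ← QuaternionAlgebra.coe_commutes, mul_assoc, mul_star_eq_normSq,
    mul_comm (normSq a), QuaternionAlgebra.coe_mul]

lemma normSq_coe (r : ℝ) : normSq (r : pH) = r ^ 2 := by
  rw [normSq, QuaternionAlgebra.star_coe, ← QuaternionAlgebra.coe_mul, QuaternionAlgebra.re_coe, sq]

lemma normSq_two : normSq (2 : pH) = 4 := by
  rw [← QuaternionAlgebra.coe_ofNat, normSq_coe]
  norm_num

lemma mul_pinv {a : pH} (h : normSq a ≠ 0) : a * pinv a = 1 := by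
  rw [pinv, mul_smul_comm, mul_star_eq_normSq, ← QuaternionAlgebra.coe_mul_eq_smul,
    ← QuaternionAlgebra.coe_mul, inv_mul_cancel₀ h, QuaternionAlgebra.coe_one]

lemma normSq_pinv {a : pH} (h : normSq a ≠ 0) : normSq (pinv a) = (normSq a)⁻¹ := by
  refine eq_inv_of_mul_eq_one_right ?_
  rw [← normSq_mul, mul_pinv h, ← QuaternionAlgebra.coe_one, normSq_coe, one_pow]

lemma normSq_add_one_sub_normSq_sub_one (p : pH) :
    normSq (p + 1) - normSq (p - 1) = 4 * p.re := by
  simp [normSq, QuaternionAlgebra.re_mul]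
  ring

theorem inverse_cayley_maps_Sigma_to_sphere_general (n : ℕ)
    (q' : Fin n → pH) (p' : pH)
    (hSig : p'.re = -∑ a, normSq (q' a))
    (h1 : normSq (p' - 1) ≠ 0) :
    ∑ a, normSq (2 * pinv (p' - 1) * q' a) + normSq (pinv (p' - 1) * (p' + 1)) = 1 := by
  have hq : ∀ a, normSq (2 * pinv (p' - 1) * q' a)
      = 4 * (normSq (p' - 1))⁻¹ * normSq (q' a) := fun a => by
    rw [normSq_mul, normSq_mul, normSq_two, normSq_pinv h1]
  rw [Finset.sum_congr rfl fun a _ => hq a, ← Finset.mul_sum, normSq_mul, normSq_pinv h1]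
  field_simp
  linarith [normSq_add_one_sub_normSq_sub_one p']

/-- The inverse paraquaternionic Cayley transform
`(q',p') ↦ (2·(p'−1)⁻¹·q', (p'−1)⁻¹·(p'+1))` maps the hypersurface
`Σ = {(q',p') : re p' = −∑ₐ normSq q'ₐ}` (away from `normSq (p'−1) = 0`) into the
pseudo-sphere `∑ₐ normSq qₐ + normSq p = 1`. -/
theorem inverse_cayley_maps_Sigma_to_sphere (n : ℕ) (hn : 1 ≤ n)
    (q' : Fin n → pH) (p' : pH)
    (hSig : p'.re = -∑ a, normSq (q' a))
    (h1 : normSq (p' - 1) ≠ 0) :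
    ∑ a, normSq (2 * pinv (p' - 1) * q' a) + normSq (pinv (p' - 1) * (p' + 1)) = 1 :=
  inverse_cayley_maps_Sigma_to_sphere_general n q' p' hSig h1
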